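/- arXiv:2401.15495 — 8 statements merged into one kernel-verified Lean document; each statement's English description precedes it below -/
import Mathlib

section
/- Fix a > 0, A_f, B_f > 0 with A_f/B_f ≤ a², and let φ = A_f B_f + 1/A_f − 1/B_f and f(w) = (φw − 1 + √((φw−1)² + 4w³))/(2w²). Define g(A₀) = 1/B_f + ∫_{A_f}^{A₀} f(w)/(1 + w f(w)²) dw − (a/√(A_f B_f)) · exp(−(1/2)∫_{A_f}^{A₀} (1/w − f(w)²/(1 + w f(w)²)) dw). Then g is strictly increasing on (0, ∞). -/
/-- the function g is strictly increasing on (0, ∞). -/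
theorem g_strictMonoOn (a Af Bf : ℝ) (ha : 0 < a) (hAf : 0 < Af) (hBf : 0 < Bf)
    (hratio : Af / Bf ≤ a ^ 2) :
    let φ : ℝ := Af * Bf + 1 / Af - 1 / Bf
    let f : ℝ → ℝ := fun w =>
      (φ * w - 1 + Real.sqrt ((φ * w - 1) ^ 2 + 4 * w ^ 3)) / (2 * w ^ 2)
    let g : ℝ → ℝ := fun A0 =>
      1 / Bf + (∫ w in Af..A0, f w / (1 + w * (f w) ^ 2))
        - (a / Real.sqrt (Af * Bf)) *
          Real.exp (-(1 / 2) * ∫ w in Af..A0, (1 / w - (f w) ^ 2 / (1 + w * (f w) ^ 2)))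
    StrictMonoOn g (Set.Ioi (0 : ℝ)) := by
  intro φ f g
  -- positivity of f on (0, ∞)
  have hfpos : ∀ w : ℝ, 0 < w → 0 < f w := by
    intro w hw
    have hs : |φ * w - 1| < Real.sqrt ((φ * w - 1) ^ 2 + 4 * w ^ 3) := by
      rw [← Real.sqrt_sq_eq_abs]
      apply Real.sqrt_lt_sqrt (sq_nonneg _)
      nlinarith [pow_pos hw 3]
    have hnum : 0 < φ * w - 1 + Real.sqrt ((φ * w - 1) ^ 2 + 4 * w ^ 3) := by
      have := neg_abs_le (φ * w - 1)
      linarith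
    exact div_pos hnum (by positivity)
  -- denominator positivity
  have hden : ∀ w : ℝ, 0 < w → 0 < 1 + w * f w ^ 2 := by
    intro w hw
    have : 0 ≤ w * f w ^ 2 := mul_nonneg hw.le (sq_nonneg _)
    linarith
  -- continuity of f
  have hfc : ContinuousOn f (Set.Ioi 0) := by
    apply ContinuousOn.div
    · exact (Continuous.continuousOn (by continuity))
    · exact (Continuous.continuousOn (by continuity))
    · intro w hw
      have hw' : (0:ℝ) < w := hw
      positivity
  -- the two integrands
  set h1 : ℝ → ℝ := fun w => f w / (1 + w * f w ^ 2) with h1def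
  set h2 : ℝ → ℝ := fun w => 1 / w - f w ^ 2 / (1 + w * f w ^ 2) with h2def
  have h1pos : ∀ w ∈ Set.Ioi (0:ℝ), 0 < h1 w := fun w hw =>
    div_pos (hfpos w hw) (hden w hw)
  have h2pos : ∀ w ∈ Set.Ioi (0:ℝ), 0 < h2 w := by
    intro w hw
    have hw' : (0:ℝ) < w := hw
    have hd := hden w hw'
    have : f w ^ 2 / (1 + w * f w ^ 2) < 1 / w := by
      rw [div_lt_div_iff₀ hd hw']
      nlinarith
    simpa [h2def, sub_pos] using this
  have h1c : ContinuousOn h1 (Set.Ioi 0) := by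
    apply ContinuousOn.div hfc
    · exact continuousOn_const.add (continuousOn_id.mul (hfc.pow 2))
    · exact fun w hw => (hden w hw).ne'
  have h2c : ContinuousOn h2 (Set.Ioi 0) := by
    apply ContinuousOn.sub
    · exact ContinuousOn.div continuousOn_const continuousOn_id (fun w hw => ne_of_gt hw)
    · exact ContinuousOn.div (hfc.pow 2)
        (continuousOn_const.add (continuousOn_id.mul (hfc.pow 2)))
        (fun w hw => (hden w hw).ne')
  -- key monotonicity lemma for integrals of positive continuous functions
  have key : ∀ F : ℝ → ℝ, ContinuousOn F (Set.Ioi 0) → (∀ w ∈ Set.Ioi (0:ℝ), 0 < F w) →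
      ∀ x y : ℝ, 0 < x → 0 < y → x < y →
      (∫ w in Af..x, F w) < ∫ w in Af..y, F w := by
    intro F hc hp x y hx hy hxy
    have hint : ∀ u v : ℝ, 0 < u → 0 < v → IntervalIntegrable F MeasureTheory.volume u v := by
      intro u v hu hv
      apply ContinuousOn.intervalIntegrable
      apply hc.mono
      intro z hz
      have h1 : min u v ≤ z := hz.1
      exact lt_of_lt_of_le (lt_min hu hv) h1
    have hadd := intervalIntegral.integral_add_adjacent_intervals
      (hint Af x hAf hx) (hint x y hx hy)
    have hposint : 0 < ∫ w in x..y, F w := by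
      apply intervalIntegral.intervalIntegral_pos_of_pos_on (hint x y hx hy)
      · intro z hz
        exact hp z (lt_trans hx hz.1)
      · exact hxy
    linarith
  -- main argument
  intro x hx y hy hxy
  have hx' : (0:ℝ) < x := hx
  have hy' : (0:ℝ) < y := hy
  have h1m := key h1 h1c h1pos x y hx' hy' hxy
  have h2m := key h2 h2c h2pos x y hx' hy' hxy
  have hcpos : 0 < a / Real.sqrt (Af * Bf) :=
    div_pos ha (Real.sqrt_pos.2 (mul_pos hAf hBf))
  have hexp : Real.exp (-(1 / 2) * ∫ w in Af..y, h2 w)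
      < Real.exp (-(1 / 2) * ∫ w in Af..x, h2 w) := by
    apply Real.exp_lt_exp.2
    linarith
  show g x < g y
  simp only [g, h1def, h2def]
  nlinarith [Real.exp_pos (-(1 / 2) * ∫ w in Af..x, h2 w),
    mul_lt_mul_of_pos_left hexp hcpos]
end

section
/- Fix a > 0 and A_f, B_f > 0 with A_f/B_f ≤ a². With g as in the lemma, lim_{A₀ → ∞} g(A₀) = +∞. Consequently, since g is continuous, strictly increasing, and g(A_f) ≤ 0, there exists a unique A₀ ≥ A_f with g(A₀) = 0. -/
/-!
The function `f(w)` is the positive root of `w²x² - (φw - 1)x - w`, so `1 + w f² = 2 + (φ - 1/w) f`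
and `f(w) ≥ 1/w` for large `w`. Hence the first integrand of `g` is eventually at least `c / w`
and its integral diverges logarithmically, while the exponential term stays between `0` and
`a / √(A_f B_f)`. Both integrands are positive, so `g` is strictly increasing, and
`g(A_f) = 1/B_f - a/√(A_f B_f) ≤ 0` is the hypothesis `A_f / B_f ≤ a²`; the root then comes from the
intermediate value theorem.
-/

open Filter Set MeasureTheory

theorem StrictMonoOn.existsUnique_eq_of_tendsto_atTop {α δ : Type*}
    [ConditionallyCompleteLinearOrder α] [TopologicalSpace α] [OrderTopology α] [DenselyOrdered α]
    [LinearOrder δ] [TopologicalSpace δ] [OrderClosedTopology δ] {g : α → δ} {x₀ : α} {y : δ}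
    (hmono : StrictMonoOn g (Ici x₀)) (hcont : ContinuousOn g (Ici x₀)) (hx₀ : g x₀ ≤ y)
    (htop : Tendsto g atTop atTop) : ∃! x, x₀ ≤ x ∧ g x = y := by
  have : Nonempty α := ⟨x₀⟩
  obtain ⟨b, hyb, hx₀b⟩ := ((htop.eventually_ge_atTop y).and (eventually_ge_atTop x₀)).exists
  obtain ⟨x, hx, rfl⟩ := intermediate_value_Icc hx₀b (hcont.mono Icc_subset_Ici_self) ⟨hx₀, hyb⟩
  exact ⟨x, ⟨hx.1, rfl⟩, fun z hz => hmono.injOn hz.1 hx.1 hz.2⟩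

theorem hasDerivAt_integral_of_continuousOn {E : Type*} [NormedAddCommGroup E] [NormedSpace ℝ E]
    [CompleteSpace E] {h : ℝ → E} {s : Set ℝ} (hs : IsOpen s) (hs' : s.OrdConnected)
    (hh : ContinuousOn h s) {a x : ℝ} (ha : a ∈ s) (hx : x ∈ s) :
    HasDerivAt (fun A => ∫ w in a..A, h w) (h x) x :=
  intervalIntegral.integral_hasDerivAt_right
    ((hh.mono (hs'.uIcc_subset ha hx)).intervalIntegrable)
    (hh.stronglyMeasurableAtFilter hs x hx) (hh.continuousAt (hs.mem_nhds hx))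

theorem tendsto_integral_atTop_of_div_le {h : ℝ → ℝ} {a W c : ℝ} (ha : 0 < a) (hW : 0 < W)
    (hc : 0 < c) (hh : ContinuousOn h (Ioi 0)) (hle : ∀ w, W ≤ w → c / w ≤ h w) :
    Tendsto (fun A => ∫ w in a..A, h w) atTop atTop := by
  have hint : ∀ {x y : ℝ}, 0 < x → 0 < y → IntervalIntegrable h volume x y := fun hx hy =>
    (hh.mono (ordConnected_Ioi.uIcc_subset hx hy)).intervalIntegrable
  have hlog : Tendsto (fun A => c * Real.log (A / W)) atTop atTop :=
    (Real.tendsto_log_atTop.comp (tendsto_id.atTop_div_const hW)).const_mul_atTop hc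
  refine tendsto_atTop_mono' atTop ?_ (tendsto_atTop_add_const_left _ (∫ w in a..W, h w) hlog)
  filter_upwards [eventually_ge_atTop W] with A hA
  have hA0 : 0 < A := hW.trans_le hA
  have hlower : c * Real.log (A / W) ≤ ∫ w in W..A, h w := by
    rw [← integral_inv_of_pos hW hA0, ← intervalIntegral.integral_const_mul]
    refine intervalIntegral.integral_mono_on hA ?_ (hint hW hA0) fun w hw => hle w hw.1
    exact (continuousOn_const.mul (continuousOn_inv₀.mono fun w hw => (hW.trans_le hw.1).ne')
      ).intervalIntegrable_of_Icc hA
  rw [← intervalIntegral.integral_add_adjacent_intervals (hint ha hW) (hint hW hA0)]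
  linarith

namespace RootOfG

noncomputable def F (φ w : ℝ) : ℝ :=
  (φ * w - 1 + √((φ * w - 1) ^ 2 + 4 * w ^ 3)) / (2 * w ^ 2)

noncomputable def H (φ w : ℝ) : ℝ := F φ w / (1 + w * F φ w ^ 2)

noncomputable def K (φ w : ℝ) : ℝ := 1 / w - F φ w ^ 2 / (1 + w * F φ w ^ 2)

noncomputable def G (φ x₀ c C A : ℝ) : ℝ :=
  c + (∫ w in x₀..A, H φ w) - C * Real.exp (-(1 / 2) * ∫ w in x₀..A, K φ w)

variable {φ w : ℝ}

theorem F_pos (hw : 0 < w) : 0 < F φ w := by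
  have hs : |φ * w - 1| < √((φ * w - 1) ^ 2 + 4 * w ^ 3) :=
    (Real.lt_sqrt (abs_nonneg _)).2 (by rw [sq_abs]; linarith [pow_pos hw 3])
  exact div_pos (by linarith [neg_abs_le (φ * w - 1)]) (by positivity)

theorem F_quadratic (hw : 0 < w) : w ^ 2 * F φ w ^ 2 = (φ * w - 1) * F φ w + w := by
  have hs : √((φ * w - 1) ^ 2 + 4 * w ^ 3) ^ 2 = (φ * w - 1) ^ 2 + 4 * w ^ 3 :=
    Real.sq_sqrt (by positivity)
  rw [F]
  generalize √((φ * w - 1) ^ 2 + 4 * w ^ 3) = s at hs ⊢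
  field_simp
  linear_combination hs

theorem inv_le_F (hw : 1 ≤ w) (hφ : 2 - φ ≤ w) : w⁻¹ ≤ F φ w := by
  have hw0 : 0 < w := one_pos.trans_le hw
  have hs : |2 * w - (φ * w - 1)| ≤ √((φ * w - 1) ^ 2 + 4 * w ^ 3) :=
    Real.abs_le_sqrt (by nlinarith [mul_le_mul_of_nonneg_left hw hw0.le])
  have h2w : w⁻¹ * (2 * w ^ 2) = 2 * w := by field_simp
  rw [F, le_div_iff₀ (by positivity), h2w]
  linarith [le_abs_self (2 * w - (φ * w - 1))]

theorem one_add_mul_F_sq_pos (hw : 0 < w) : 0 < 1 + w * F φ w ^ 2 := by positivity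

theorem H_pos (hw : 0 < w) : 0 < H φ w :=
  div_pos (F_pos hw) (one_add_mul_F_sq_pos hw)

theorem K_eq (hw : 0 < w) : K φ w = (w * (1 + w * F φ w ^ 2))⁻¹ := by
  have := one_add_mul_F_sq_pos (φ := φ) hw
  rw [K]
  field_simp
  ring

theorem K_pos (hw : 0 < w) : 0 < K φ w := by
  rw [K_eq hw]
  have := one_add_mul_F_sq_pos (φ := φ) hw
  positivity

theorem div_le_H (hw : 2 + |φ| ≤ w) : (2 + |φ|)⁻¹ / w ≤ H φ w := by
  have hw1 : 1 ≤ w := by linarith [abs_nonneg φ]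
  have hw0 : 0 < w := one_pos.trans_le hw1
  have hF0 := F_pos (φ := φ) hw0
  have hwF : 1 ≤ w * F φ w := by
    have := inv_le_F (φ := φ) hw1 (by linarith [neg_abs_le φ])
    rwa [inv_le_iff_one_le_mul₀' hw0] at this
  have hden : 1 + w * F φ w ^ 2 = 2 + (φ - w⁻¹) * F φ w := by
    have := F_quadratic (φ := φ) hw0
    field_simp
    linarith
  rw [H, div_le_div_iff₀ hw0 (one_add_mul_F_sq_pos hw0), inv_mul_le_iff₀ (by positivity), hden]
  have : (φ - w⁻¹) * F φ w ≤ |φ| * (w * F φ w) := by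
    have hφF := mul_le_mul_of_nonneg_right (le_abs_self φ) hF0.le
    have hFw := mul_le_mul_of_nonneg_left (le_mul_of_one_le_left hF0.le hw1) (abs_nonneg φ)
    have := mul_pos (inv_pos.2 hw0) hF0
    rw [sub_mul]
    linarith
  nlinarith

theorem continuousOn_F : ContinuousOn (F φ) (Ioi 0) :=
  ContinuousOn.div (by fun_prop) (by fun_prop) fun w (hw : 0 < w) => by positivity

theorem continuousOn_H : ContinuousOn (H φ) (Ioi 0) :=
  continuousOn_F.div (continuousOn_const.add (continuousOn_id.mul (continuousOn_F.pow 2)))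
    fun _ hw => (one_add_mul_F_sq_pos hw).ne'

theorem continuousOn_K : ContinuousOn (K φ) (Ioi 0) :=
  (continuousOn_const.div continuousOn_id fun _ hw => ne_of_gt hw).sub
    ((continuousOn_F.pow 2).div (continuousOn_const.add (continuousOn_id.mul (continuousOn_F.pow 2)))
      fun _ hw => (one_add_mul_F_sq_pos hw).ne')

variable {x₀ c C A : ℝ}

theorem hasDerivAt_G (hx₀ : 0 < x₀) (hA : 0 < A) :
    HasDerivAt (G φ x₀ c C)
      (H φ A - C * (Real.exp (-(1 / 2) * ∫ w in x₀..A, K φ w) * (-(1 / 2) * K φ A))) A :=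
  ((hasDerivAt_integral_of_continuousOn isOpen_Ioi ordConnected_Ioi continuousOn_H hx₀ hA).const_add
    c).sub (((hasDerivAt_integral_of_continuousOn isOpen_Ioi ordConnected_Ioi continuousOn_K hx₀
      hA).const_mul _).exp.const_mul C)

theorem continuousOn_G (hx₀ : 0 < x₀) : ContinuousOn (G φ x₀ c C) (Ioi 0) :=
  fun _ hA => (hasDerivAt_G hx₀ hA).continuousAt.continuousWithinAt

theorem strictMonoOn_G (hx₀ : 0 < x₀) (hC : 0 ≤ C) : StrictMonoOn (G φ x₀ c C) (Ioi 0) := by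
  refine strictMonoOn_of_deriv_pos (convex_Ioi 0) (continuousOn_G hx₀) fun A hA => ?_
  rw [interior_Ioi] at hA
  rw [(hasDerivAt_G hx₀ hA).deriv]
  have := mul_nonneg (mul_nonneg hC (Real.exp_pos (-(1 / 2) * ∫ w in x₀..A, K φ w)).le)
    (K_pos (φ := φ) hA).le
  nlinarith [H_pos (φ := φ) hA]

theorem G_self : G φ x₀ c C x₀ = c - C := by
  simp [G]

theorem tendsto_G_atTop (hx₀ : 0 < x₀) (hC : 0 ≤ C) : Tendsto (G φ x₀ c C) atTop atTop := by
  have hW : 0 < 2 + |φ| := by positivity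
  refine tendsto_atTop_mono' atTop ?_ (tendsto_atTop_add_const_left _ (c - C)
    (tendsto_integral_atTop_of_div_le hx₀ hW (inv_pos.2 hW) continuousOn_H fun _ => div_le_H))
  filter_upwards [eventually_ge_atTop x₀] with A hA
  have hK : 0 ≤ ∫ w in x₀..A, K φ w :=
    intervalIntegral.integral_nonneg hA fun w hw => (K_pos (hx₀.trans_le hw.1)).le
  have hexp : Real.exp (-(1 / 2) * ∫ w in x₀..A, K φ w) ≤ 1 :=
    Real.exp_le_one_iff.2 (by linarith)
  rw [G]
  nlinarith

end RootOfG

open RootOfG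

/-- g(A₀) → ∞ as A₀ → ∞, and hence there is a unique A₀ ≥ A_f with g(A₀) = 0. -/
theorem g_tendsto_atTop_and_unique_root (a Af Bf : ℝ) (ha : 0 < a) (hAf : 0 < Af)
    (hBf : 0 < Bf) (hratio : Af / Bf ≤ a ^ 2) :
    let φ : ℝ := Af * Bf + 1 / Af - 1 / Bf
    let f : ℝ → ℝ := fun w =>
      (φ * w - 1 + Real.sqrt ((φ * w - 1) ^ 2 + 4 * w ^ 3)) / (2 * w ^ 2)
    let g : ℝ → ℝ := fun A0 =>
      1 / Bf + (∫ w in Af..A0, f w / (1 + w * (f w) ^ 2))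
        - (a / Real.sqrt (Af * Bf)) *
          Real.exp (-(1 / 2) * ∫ w in Af..A0, (1 / w - (f w) ^ 2 / (1 + w * (f w) ^ 2)))
    Tendsto g atTop atTop ∧ ∃! A0 : ℝ, Af ≤ A0 ∧ g A0 = 0 := by
  intro φ f g
  have hg : g = G φ Af (1 / Bf) (a / √(Af * Bf)) := rfl
  have hC : 0 ≤ a / √(Af * Bf) := by positivity
  have hgAf : g Af ≤ 0 := by
    have hsqrt : √(Af * Bf) ≤ a * Bf := Real.sqrt_le_iff.2
      ⟨by positivity, by nlinarith [(div_le_iff₀ hBf).1 hratio]⟩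
    rw [hg, G_self, sub_nonpos, div_le_div_iff₀ hBf (by positivity)]
    linarith
  have hg_top : Tendsto g atTop atTop := hg ▸ tendsto_G_atTop hAf hC
  have hsub : Ici Af ⊆ Ioi 0 := Ici_subset_Ioi.2 hAf
  exact ⟨hg_top, ((strictMonoOn_G hAf hC).mono hsub).existsUnique_eq_of_tendsto_atTop
    ((continuousOn_G hAf).mono hsub) hgAf hg_top⟩
end

section
/- Fix a > 0 and A_f, B_f > 0 with A_f/B_f ≤ a². There exists a unique pair (A₀, ψ) with A₀ ≥ A_f and ψ > 0 such that ∫_{A_f}^{A₀} f(w)/(1 + w f(w)²) dw = A₀/(aψ) − 1/B_f and ∫_{A_f}^{A₀} f(w)²/(1 + w f(w)²) dw = ln(A₀³ B_f/(a⁴ψ²)). -/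
/-!
Solving the first equation for `ψ = A₀ / (a (I₁(A₀) + 1/B_f))`, where `I₁, I₂` are the two
integrals as functions of their upper limit, turns the second one into `G(A₀) = log (a² / B_f)`
with `G(A) = log A + 2 log (I₁(A) + 1/B_f) - I₂(A)`. Since `f/(1 + w f²) ≥ 0` and
`f²/(1 + w f²) < 1/w`, `G' > 0`; the hypothesis `A_f / B_f ≤ a²` is exactly
`G(A_f) ≤ log (a² / B_f)`; and `G → ∞` because `f/(1 + w f²) = w / √((φw - 1)² + 4w³)` is at
least a constant times `1/w` for `w ≥ 1`, so `I₁` grows logarithmically. The intermediate value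
theorem and strict monotonicity give exactly one `A₀`.
-/

open Real Set Filter intervalIntegral MeasureTheory

theorem existsUnique_eq_of_hasDerivAt_pos {G G' : ℝ → ℝ} {c t : ℝ}
    (hG : ∀ x, c ≤ x → HasDerivAt G (G' x) x) (hG' : ∀ x, c < x → 0 < G' x)
    (hc : G c ≤ t) (htop : Tendsto G atTop atTop) : ∃! x, c ≤ x ∧ G x = t := by
  have hcont : ContinuousOn G (Ici c) := fun x hx => (hG x hx).continuousAt.continuousWithinAt
  have hmono : StrictMonoOn G (Ici c) :=
    strictMonoOn_of_deriv_pos (convex_Ici c) hcont fun x hx => by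
      rw [interior_Ici] at hx
      exact (hG x hx.le).deriv ▸ hG' x hx
  obtain ⟨x, hx, hGx⟩ := intermediate_value_Ici hcont htop hc
  exact ⟨x, ⟨hx, hGx⟩, fun y ⟨hy, hGy⟩ => hmono.injOn hy hx (hGy.trans hGx.symm)⟩

theorem hasDerivAt_integral_of_continuousOn_s9 {g : ℝ → ℝ} {s : Set ℝ} {c x : ℝ} (hs : IsOpen s)
    (hg : ContinuousOn g s) (hcx : uIcc c x ⊆ s) :
    HasDerivAt (fun u => ∫ w in c..u, g w) (g x) x :=
  integral_hasDerivAt_right (hg.mono hcx).intervalIntegrable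
    (hg.stronglyMeasurableAtFilter hs x (hcx right_mem_uIcc))
    (hg.continuousAt (hs.mem_nhds (hcx right_mem_uIcc)))

theorem integral_le_log_sub_log {g : ℝ → ℝ} {c x : ℝ} (hc : 0 < c) (hcx : c ≤ x)
    (hg : IntervalIntegrable g volume c x) (hle : ∀ w ∈ Icc c x, g w ≤ w⁻¹) :
    ∫ w in c..x, g w ≤ log x - log c := by
  have hx : 0 < x := hc.trans_le hcx
  rw [← log_div hx.ne' hc.ne', ← integral_inv_of_pos hc hx]
  exact integral_mono_on hcx hg
    (intervalIntegrable_inv (fun w hw => (ordConnected_Ioi.uIcc_subset hc hx hw).ne')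
      continuousOn_id) hle

theorem mul_log_sub_log_le_integral {g : ℝ → ℝ} {c x k : ℝ} (hc : 0 < c) (hcx : c ≤ x)
    (hg : IntervalIntegrable g volume c x) (hle : ∀ w ∈ Icc c x, k * w⁻¹ ≤ g w) :
    k * (log x - log c) ≤ ∫ w in c..x, g w := by
  have hx : 0 < x := hc.trans_le hcx
  rw [← log_div hx.ne' hc.ne', ← integral_inv_of_pos hc hx, ← intervalIntegral.integral_const_mul]
  exact integral_mono_on hcx
    ((intervalIntegrable_inv (fun w hw => (ordConnected_Ioi.uIcc_subset hc hx hw).ne')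
      continuousOn_id).const_mul k) hg hle

theorem tendsto_integral_atTop_of_mul_inv_le {g : ℝ → ℝ} {c k M : ℝ}
    (hg : ContinuousOn g (Ioi 0)) (hc : 0 < c) (hk : 0 < k) (hM : 0 < M)
    (hle : ∀ w, M ≤ w → k * w⁻¹ ≤ g w) :
    Tendsto (fun x => ∫ w in c..x, g w) atTop atTop := by
  have hint : ∀ x y : ℝ, 0 < x → 0 < y → IntervalIntegrable g volume x y := fun x y hx hy =>
    (hg.mono (ordConnected_Ioi.uIcc_subset hx hy)).intervalIntegrable
  have hlog : Tendsto (fun x => (∫ w in c..M, g w) + k * (log x - log M)) atTop atTop :=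
    tendsto_atTop_add_const_left _ _
      ((tendsto_atTop_add_const_right _ _ tendsto_log_atTop).const_mul_atTop hk)
  refine tendsto_atTop_mono' _ ?_ hlog
  filter_upwards [eventually_ge_atTop M] with x hx
  rw [← integral_add_adjacent_intervals (hint c M hc hM) (hint M x hM (hM.trans_le hx))]
  gcongr
  exact mul_log_sub_log_le_integral hM hx (hint M x hM (hM.trans_le hx))
    fun w hw => hle w hw.1

/-- The positive root `x` of `w² x² - (φ w - 1) x - w = 0`. -/
noncomputable def positiveRoot (φ w : ℝ) : ℝ :=
  (φ * w - 1 + √((φ * w - 1) ^ 2 + 4 * w ^ 3)) / (2 * w ^ 2)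

section positiveRoot

variable {φ w : ℝ}

theorem positiveRoot_pos (hw : 0 < w) : 0 < positiveRoot φ w := by
  have hlt : |φ * w - 1| < √((φ * w - 1) ^ 2 + 4 * w ^ 3) := by
    rw [← sqrt_sq_eq_abs]
    exact sqrt_lt_sqrt (sq_nonneg _) (by linarith [pow_pos hw 3])
  have := neg_abs_le (φ * w - 1)
  exact div_pos (by linarith) (by positivity)

theorem continuousOn_positiveRoot : ContinuousOn (positiveRoot φ) (Ioi 0) := by
  unfold positiveRoot
  exact ContinuousOn.div (by fun_prop) (by fun_prop) fun w (hw : 0 < w) => by positivity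

theorem positiveRoot_div_one_add_mul_sq (hw : 0 < w) :
    positiveRoot φ w / (1 + w * positiveRoot φ w ^ 2) = w / √((φ * w - 1) ^ 2 + 4 * w ^ 3) := by
  have hS := sq_sqrt (by positivity : 0 ≤ (φ * w - 1) ^ 2 + 4 * w ^ 3)
  have hS0 : 0 < √((φ * w - 1) ^ 2 + 4 * w ^ 3) := sqrt_pos.2 (by positivity)
  have hd : 0 < 1 + w * positiveRoot φ w ^ 2 := by
    have := positiveRoot_pos (φ := φ) hw; positivity
  rw [div_eq_div_iff hd.ne' hS0.ne']
  unfold positiveRoot at hd ⊢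
  generalize √((φ * w - 1) ^ 2 + 4 * w ^ 3) = S at hS hS0 hd ⊢
  field_simp
  linear_combination hS

theorem inv_sqrt_mul_inv_le_positiveRoot_div (hw : 1 ≤ w) :
    (√(2 * φ ^ 2 + 6))⁻¹ * w⁻¹ ≤ positiveRoot φ w / (1 + w * positiveRoot φ w ^ 2) := by
  have hw0 : 0 < w := one_pos.trans_le hw
  have hD : (φ * w - 1) ^ 2 + 4 * w ^ 3 ≤ (√(2 * φ ^ 2 + 6) * w ^ 2) ^ 2 := by
    rw [mul_pow, sq_sqrt (by positivity)]
    nlinarith [sq_nonneg (φ * w + 1), pow_le_pow_right₀ hw (by norm_num : 2 ≤ 4),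
      pow_le_pow_right₀ hw (by norm_num : 3 ≤ 4), pow_le_pow_right₀ hw (by norm_num : 0 ≤ 4),
      sq_nonneg φ]
  have hle : √((φ * w - 1) ^ 2 + 4 * w ^ 3) ≤ √(2 * φ ^ 2 + 6) * w ^ 2 :=
    sqrt_le_iff.2 ⟨by positivity, hD⟩
  rw [positiveRoot_div_one_add_mul_sq hw0, ← mul_inv, le_div_iff₀ (sqrt_pos.2 (by positivity))]
  calc (√(2 * φ ^ 2 + 6) * w)⁻¹ * √((φ * w - 1) ^ 2 + 4 * w ^ 3)
      ≤ (√(2 * φ ^ 2 + 6) * w)⁻¹ * (√(2 * φ ^ 2 + 6) * w ^ 2) := by gcongr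
    _ = w := by field_simp

end positiveRoot

theorem sq_div_one_add_mul_sq_lt_inv {w : ℝ} (hw : 0 < w) (x : ℝ) :
    x ^ 2 / (1 + w * x ^ 2) < w⁻¹ := by
  rw [div_lt_iff₀ (by positivity), inv_mul_eq_div, lt_div_iff₀ hw]
  linarith

noncomputable def balance (Af Bf : ℝ) (g₁ g₂ : ℝ → ℝ) (A : ℝ) : ℝ :=
  log A + 2 * log ((∫ w in Af..A, g₁ w) + 1 / Bf) - ∫ w in Af..A, g₂ w

theorem pos_and_eq_and_log_eq_iff {a Bf A ψ I J : ℝ} (ha : 0 < a) (hBf : 0 < Bf) (hA : 0 < A)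
    (hI : 0 < I + 1 / Bf) :
    (0 < ψ ∧ I = A / (a * ψ) - 1 / Bf ∧ J = log (A ^ 3 * Bf / (a ^ 4 * ψ ^ 2))) ↔
      (log A + 2 * log (I + 1 / Bf) - J = log (a ^ 2 / Bf) ∧ ψ = A / (a * (I + 1 / Bf))) := by
  have hlog : log (A ^ 3 * Bf / (a ^ 4 * (A / (a * (I + 1 / Bf))) ^ 2))
      = log A + 2 * log (I + 1 / Bf) - log (a ^ 2 / Bf) := by
    rw [show A ^ 3 * Bf / (a ^ 4 * (A / (a * (I + 1 / Bf))) ^ 2)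
        = A * (I + 1 / Bf) ^ 2 / (a ^ 2 / Bf) by field_simp,
      log_div (by positivity) (by positivity), log_mul hA.ne' (by positivity), log_pow]
    push_cast
    ring
  constructor
  · rintro ⟨hψ, h₁, h₂⟩
    obtain rfl : ψ = A / (a * (I + 1 / Bf)) := by
      rw [h₁]; field_simp; ring
    exact ⟨by linarith, rfl⟩
  · rintro ⟨h, rfl⟩
    refine ⟨by positivity, by field_simp; ring, by linarith⟩

section balance

variable {Af Bf : ℝ} {g₁ g₂ : ℝ → ℝ}

theorem integral_add_one_div_pos (hAf : 0 < Af) (hBf : 0 < Bf)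
    (hg₁_nonneg : ∀ w, 0 < w → 0 ≤ g₁ w) {A : ℝ} (hA : Af ≤ A) :
    0 < (∫ w in Af..A, g₁ w) + 1 / Bf :=
  add_pos_of_nonneg_of_pos (integral_nonneg hA fun w hw => hg₁_nonneg w (hAf.trans_le hw.1))
    (one_div_pos.2 hBf)

theorem hasDerivAt_balance (hAf : 0 < Af) (hBf : 0 < Bf) (hg₁ : ContinuousOn g₁ (Ioi 0))
    (hg₂ : ContinuousOn g₂ (Ioi 0)) (hg₁_nonneg : ∀ w, 0 < w → 0 ≤ g₁ w) {A : ℝ} (hA : Af ≤ A) :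
    HasDerivAt (balance Af Bf g₁ g₂)
      (A⁻¹ + 2 * (g₁ A / ((∫ w in Af..A, g₁ w) + 1 / Bf)) - g₂ A) A := by
  have hsub : uIcc Af A ⊆ Ioi 0 := ordConnected_Ioi.uIcc_subset hAf (hAf.trans_le hA)
  exact ((hasDerivAt_log (hAf.trans_le hA).ne').add
    ((((hasDerivAt_integral_of_continuousOn_s9 isOpen_Ioi hg₁ hsub).add_const (1 / Bf)).log
      (integral_add_one_div_pos hAf hBf hg₁_nonneg hA).ne').const_mul 2)).sub
    (hasDerivAt_integral_of_continuousOn_s9 isOpen_Ioi hg₂ hsub)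

theorem tendsto_balance_atTop (hAf : 0 < Af) (hg₁ : ContinuousOn g₁ (Ioi 0))
    (hg₂ : ContinuousOn g₂ (Ioi 0)) (hg₂_le : ∀ w, 0 < w → g₂ w ≤ w⁻¹) {k M : ℝ} (hk : 0 < k)
    (hM : 0 < M) (hg₁_ge : ∀ w, M ≤ w → k * w⁻¹ ≤ g₁ w) :
    Tendsto (balance Af Bf g₁ g₂) atTop atTop := by
  have hI₁ := tendsto_integral_atTop_of_mul_inv_le hg₁ hAf hk hM hg₁_ge
  refine tendsto_atTop_mono' _ ?_ (tendsto_atTop_add_const_left _ (log Af)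
    ((tendsto_log_atTop.comp (tendsto_atTop_add_const_right _ (1 / Bf) hI₁)).const_mul_atTop
      two_pos))
  filter_upwards [eventually_ge_atTop Af] with A hA
  have := integral_le_log_sub_log hAf hA
    (hg₂.mono (ordConnected_Ioi.uIcc_subset hAf (hAf.trans_le hA))).intervalIntegrable
    fun w hw => hg₂_le w (hAf.trans_le hw.1)
  simp only [balance, Function.comp_apply]
  linarith

theorem balance_self_le_log {a : ℝ} (hAf : 0 < Af) (hBf : 0 < Bf) (hratio : Af / Bf ≤ a ^ 2) :
    balance Af Bf g₁ g₂ Af ≤ log (a ^ 2 / Bf) := by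
  simp only [balance, integral_same, zero_add, sub_zero]
  calc log Af + 2 * log (1 / Bf) = log (Af / Bf / Bf) := by
        rw [log_div (div_pos hAf hBf).ne' hBf.ne', log_div hAf.ne' hBf.ne', one_div, log_inv]
        ring
    _ ≤ log (a ^ 2 / Bf) := log_le_log (by positivity) (by gcongr)

theorem existsUnique_balance_eq (hAf : 0 < Af) (hBf : 0 < Bf) (hg₁ : ContinuousOn g₁ (Ioi 0))
    (hg₂ : ContinuousOn g₂ (Ioi 0)) (hg₁_nonneg : ∀ w, 0 < w → 0 ≤ g₁ w)
    (hg₂_lt : ∀ w, 0 < w → g₂ w < w⁻¹) {k M : ℝ} (hk : 0 < k) (hM : 0 < M)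
    (hg₁_ge : ∀ w, M ≤ w → k * w⁻¹ ≤ g₁ w) {t : ℝ} (ht : balance Af Bf g₁ g₂ Af ≤ t) :
    ∃! A, Af ≤ A ∧ balance Af Bf g₁ g₂ A = t := by
  refine existsUnique_eq_of_hasDerivAt_pos
    (fun A hA => hasDerivAt_balance hAf hBf hg₁ hg₂ hg₁_nonneg hA) (fun A hA => ?_) ht
    (tendsto_balance_atTop hAf hg₁ hg₂ (fun w hw => (hg₂_lt w hw).le) hk hM hg₁_ge)
  have hA0 : 0 < A := hAf.trans hA
  have : 0 ≤ g₁ A / ((∫ w in Af..A, g₁ w) + 1 / Bf) :=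
    div_nonneg (hg₁_nonneg A hA0) (integral_add_one_div_pos hAf hBf hg₁_nonneg hA.le).le
  linarith [hg₂_lt A hA0]

end balance

/-- Lemma 1: existence and uniqueness of the pair (A₀, ψ). -/
theorem exists_unique_A0_psi (a Af Bf : ℝ) (ha : 0 < a) (hAf : 0 < Af) (hBf : 0 < Bf)
    (hratio : Af / Bf ≤ a ^ 2) :
    let φ : ℝ := Af * Bf + 1 / Af - 1 / Bf
    let f : ℝ → ℝ := fun w =>
      (φ * w - 1 + Real.sqrt ((φ * w - 1) ^ 2 + 4 * w ^ 3)) / (2 * w ^ 2)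
    ∃! p : ℝ × ℝ, Af ≤ p.1 ∧ 0 < p.2 ∧
      (∫ w in Af..p.1, f w / (1 + w * (f w) ^ 2)) = p.1 / (a * p.2) - 1 / Bf ∧
      (∫ w in Af..p.1, (f w) ^ 2 / (1 + w * (f w) ^ 2))
        = Real.log (p.1 ^ 3 * Bf / (a ^ 4 * p.2 ^ 2)) := by
  intro φ f
  set g₁ : ℝ → ℝ := fun w => positiveRoot φ w / (1 + w * positiveRoot φ w ^ 2)
  set g₂ : ℝ → ℝ := fun w => positiveRoot φ w ^ 2 / (1 + w * positiveRoot φ w ^ 2)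
  have hdenom : ∀ w ∈ Ioi (0 : ℝ), 1 + w * positiveRoot φ w ^ 2 ≠ 0 := fun w (hw : 0 < w) => by
    positivity
  have hf : ContinuousOn (positiveRoot φ) (Ioi 0) := continuousOn_positiveRoot
  have hg₁ : ContinuousOn g₁ (Ioi 0) := hf.div (by fun_prop) hdenom
  have hg₂ : ContinuousOn g₂ (Ioi 0) := (hf.pow 2).div (by fun_prop) hdenom
  have hg₁_nonneg : ∀ w, 0 < w → 0 ≤ g₁ w := fun w hw => by
    have := positiveRoot_pos (φ := φ) hw; positivity
  have hI₁ := fun A (hA : Af ≤ A) => integral_add_one_div_pos hAf hBf hg₁_nonneg hA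
  obtain ⟨A₀, ⟨hA₀, hbal⟩, huniq⟩ := existsUnique_balance_eq hAf hBf hg₁ hg₂ hg₁_nonneg
    (fun w hw => sq_div_one_add_mul_sq_lt_inv hw _) (inv_pos.2 (sqrt_pos.2 (by positivity)))
    one_pos (fun w hw => inv_sqrt_mul_inv_le_positiveRoot_div hw)
    (balance_self_le_log hAf hBf hratio)
  refine ⟨(A₀, A₀ / (a * ((∫ w in Af..A₀, g₁ w) + 1 / Bf))), ⟨hA₀, ?_⟩, ?_⟩
  · exact (pos_and_eq_and_log_eq_iff ha hBf (hAf.trans_le hA₀) (hI₁ A₀ hA₀)).2 ⟨hbal, rfl⟩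
  · rintro ⟨A, ψ⟩ ⟨hA, hsys⟩
    dsimp only at hA hsys
    obtain ⟨hbalA, rfl⟩ := (pos_and_eq_and_log_eq_iff ha hBf (hAf.trans_le hA) (hI₁ A hA)).1 hsys
    obtain rfl := huniq A ⟨hA, hbalA⟩
    rfl
end

section
/- Suppose smooth functions V, Z, T̄, S̄ on an interval satisfy S̄' = 1, T̄' = V̄/Z̄, Z̄' = −(S̄/(−S̄R̄ + T̄²))², and V̄' = T̄·Z̄'/S̄ (with Z̄ ≠ 0 and −S̄R̄+T̄² ≠ 0 on the interval). Then the quantity S̄V̄ − T̄Z̄ is constant on the interval. -/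
/-!
Since `S̄' = 1`, the derivative of `S̄V̄ − T̄Z̄` is `V̄ + S̄V̄' − T̄'Z̄ − T̄Z̄'`. The ODEs give
`T̄'Z̄ = V̄` and `S̄V̄' = T̄Z̄'`, so the derivative vanishes, and a function with zero
derivative on a convex set is constant there.
-/

theorem Convex.eq_of_forall_hasDerivAt_zero {𝕜 G : Type*} [RCLike 𝕜] [NormedAddCommGroup G]
    [NormedSpace 𝕜 G] {s : Set 𝕜} {f : 𝕜 → G} (hs : Convex ℝ s)
    (hf : ∀ x ∈ s, HasDerivAt f 0 x) {x y : 𝕜} (hx : x ∈ s) (hy : y ∈ s) : f x = f y := by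
  have h := hs.norm_image_sub_le_of_norm_hasDerivWithin_le
    (fun z hz => (hf z hz).hasDerivWithinAt) (fun _ _ => norm_zero.le) hy hx
  rw [zero_mul, norm_le_zero_iff, sub_eq_zero] at h
  exact h

theorem hasDerivAt_mul_sub_mul_eq_zero {S T V Z : ℝ → ℝ} {t z' v' : ℝ}
    (hS : HasDerivAt S 1 t) (hT : HasDerivAt T (V t / Z t) t) (hZ : HasDerivAt Z z' t)
    (hV : HasDerivAt V v' t) (hZt : Z t ≠ 0) (hSV : S t * v' = T t * z') :
    HasDerivAt (fun t => S t * V t - T t * Z t) 0 t := by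
  refine ((hS.mul hV).sub (hT.mul hZ)).congr_deriv ?_
  rw [hSV, div_mul_cancel₀ _ hZt]
  ring

/-- `S̄V̄' = T̄Z̄'` also where `S̄` vanishes, because `Z̄'` carries the factor `S̄²`. -/
theorem mul_mul_neg_div_sq_div_self (s d x : ℝ) :
    s * (x * -(s / d) ^ 2 / s) = x * -(s / d) ^ 2 := by
  rcases eq_or_ne s 0 with rfl | hs
  · simp
  · field_simp

theorem barS_barV_sub_barT_barZ_const_general (a : ℝ) (J : Set ℝ) (hJ : Convex ℝ J)
    (Tb Rb Vb Zb : ℝ → ℝ)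
    (Sb : ℝ → ℝ) (hSb : ∀ t, Sb t = 1 / a ^ 2 + t)
    (hZne : ∀ t ∈ J, Zb t ≠ 0)
    (hT : ∀ t ∈ J, HasDerivAt Tb (Vb t / Zb t) t)
    (hZ : ∀ t ∈ J, HasDerivAt Zb (-(Sb t / (-Sb t * Rb t + (Tb t) ^ 2)) ^ 2) t)
    (hV : ∀ t ∈ J, HasDerivAt Vb
      (Tb t * (-(Sb t / (-Sb t * Rb t + (Tb t) ^ 2)) ^ 2) / Sb t) t) :
    ∀ t₁ ∈ J, ∀ t₂ ∈ J,
      Sb t₁ * Vb t₁ - Tb t₁ * Zb t₁ = Sb t₂ * Vb t₂ - Tb t₂ * Zb t₂ := by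
  have hS : ∀ t, HasDerivAt Sb 1 t := fun t => by
    rw [show Sb = fun t => 1 / a ^ 2 + t from funext hSb]
    exact (hasDerivAt_id t).const_add _
  intro t₁ h₁ t₂ h₂
  refine hJ.eq_of_forall_hasDerivAt_zero (f := fun t => Sb t * Vb t - Tb t * Zb t)
    (fun t ht => ?_) h₁ h₂
  exact hasDerivAt_mul_sub_mul_eq_zero (hS t) (hT t ht) (hZ t ht) (hV t ht) (hZne t ht)
    (mul_mul_neg_div_sq_div_self _ _ _)

/-- S̄V̄ − T̄Z̄ is constant along solutions of the barred system. -/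
theorem barS_barV_sub_barT_barZ_const (a : ℝ) (ha : 0 < a) (J : Set ℝ) (hJ : Convex ℝ J)
    (Tb Rb Vb Zb : ℝ → ℝ)
    (Sb : ℝ → ℝ) (hSb : ∀ t, Sb t = 1 / a ^ 2 + t)
    (hZne : ∀ t ∈ J, Zb t ≠ 0)
    (hden : ∀ t ∈ J, -Sb t * Rb t + (Tb t) ^ 2 ≠ 0)
    (hT : ∀ t ∈ J, HasDerivAt Tb (Vb t / Zb t) t)
    (hZ : ∀ t ∈ J, HasDerivAt Zb (-(Sb t / (-Sb t * Rb t + (Tb t) ^ 2)) ^ 2) t)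
    (hV : ∀ t ∈ J, HasDerivAt Vb
      (Tb t * (-(Sb t / (-Sb t * Rb t + (Tb t) ^ 2)) ^ 2) / Sb t) t) :
    ∀ t₁ ∈ J, ∀ t₂ ∈ J,
      Sb t₁ * Vb t₁ - Tb t₁ * Zb t₁ = Sb t₂ * Vb t₂ - Tb t₂ * Zb t₂ :=
  barS_barV_sub_barT_barZ_const_general a J hJ Tb Rb Vb Zb Sb hSb hZne hT hZ hV
end

section
/- Let A, B be differentiable real-valued functions on an interval with A, B, S̄ nonvanishing (S̄(t) = 1/a² + t > 0), satisfying A' = −1/(S̄B²) − A/S̄ and B' = −1/(S̄A²) + B/S̄. Then the quantity A·B + 1/A − 1/B is constant on the interval. -/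
/-- A·B + 1/A − 1/B is constant along solutions of the 2-d system. -/
theorem AB_invariant_const (a : ℝ) (ha : 0 < a) (J : Set ℝ) (hJ : Convex ℝ J)
    (hJsub : J ⊆ Set.Ioi (-(1 / a ^ 2)))
    (A B : ℝ → ℝ)
    (hA0 : ∀ t ∈ J, A t ≠ 0) (hB0 : ∀ t ∈ J, B t ≠ 0)
    (hA : ∀ t ∈ J, HasDerivAt A
      (-(1 / ((1 / a ^ 2 + t) * (B t) ^ 2)) - A t / (1 / a ^ 2 + t)) t)
    (hB : ∀ t ∈ J, HasDerivAt B
      (-(1 / ((1 / a ^ 2 + t) * (A t) ^ 2)) + B t / (1 / a ^ 2 + t)) t) :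
    ∀ t₁ ∈ J, ∀ t₂ ∈ J,
      A t₁ * B t₁ + 1 / A t₁ - 1 / B t₁ = A t₂ * B t₂ + 1 / A t₂ - 1 / B t₂ := by
  have key : ∀ t ∈ J, HasDerivWithinAt
      (fun t => A t * B t + 1 / A t - 1 / B t) 0 J t := by
    intro t ht
    have hS : (1 / a ^ 2 + t) ≠ 0 := by
      have h1 : -(1 / a ^ 2) < t := hJsub ht
      intro h; linarith [h]
    have hAt := hA0 t ht
    have hBt := hB0 t ht
    have hAd := hA t ht
    have hBd := hB t ht
    have h1 := hAd.mul hBd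
    have h2 := hAd.inv hAt
    have h3 := hBd.inv hBt
    have htot := (h1.add h2).sub h3
    have hgen : ∀ S x y : ℝ, S ≠ 0 → x ≠ 0 → y ≠ 0 →
        ((-(1 / (S * y ^ 2)) - x / S) * y +
        x * (-(1 / (S * x ^ 2)) + y / S) +
        -(-(1 / (S * y ^ 2)) - x / S) / x ^ 2 -
        -(-(1 / (S * x ^ 2)) + y / S) / y ^ 2) = 0 := by
      intro S x y hS hx hy
      field_simp
      ring
    have heq := hgen (1 / a ^ 2 + t) (A t) (B t) hS hAt hBt
    rw [heq] at htot
    have : (fun t => A t * B t + 1 / A t - 1 / B t)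
        = fun t => A t * B t + (A t)⁻¹ - (B t)⁻¹ := by
      funext s; rw [one_div, one_div]
    rw [this]
    exact htot.hasDerivWithinAt
  intro t₁ ht₁ t₂ ht₂
  have hb := hJ.norm_image_sub_le_of_norm_hasDerivWithin_le
    (f' := fun _ => (0 : ℝ)) (fun t ht => key t ht) (C := 0)
    (fun t ht => by simp) ht₂ ht₁
  simp only [zero_mul, norm_le_zero_iff, sub_eq_zero] at hb
  exact hb
end

section
/- Let θ : [0,T] → ℝ^m solve θ'(t) = F(θ(t), t), and let the sequence θ₀, θ₁, … be generated by the coordinate-sequential (Gauss–Seidel-style) Euler update θ_{i+1,j} = θ_{i,j} + Δ·F_j(θ_i^{(j)}, iΔ) for j = 1,…,m, where θ_i^{(j)} = (θ_{i+1,1},…,θ_{i+1,j−1}, θ_{i,j},…,θ_{i,m}) and θ₀ = θ(0). Assume there exist sets 𝒜(t) ⊂ ℝ^m with inf{‖θ(t) − θ‖ : t ∈ [0,T], θ ∉ 𝒜(t)} > 0, and constants K₁, K₂, K₃ such that for all t ∈ [0,T], θ, θ̃ ∈ 𝒜(t), j: |F_j(θ,t) − F_j(θ̃,t)| ≤ K₁‖θ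 − θ̃‖, |∂F_j/∂t(θ,t)| ≤ K₂, and ‖F(θ,t)‖ ≤ K₃. Then max_{0 ≤ i ≤ ⌊T/Δ⌋} ‖θ(iΔ) − θ_i‖ → 0 as Δ → 0. -/
open Set

/-- The Euclidean norm of a vector in `Fin m → ℝ`. -/
noncomputable def eNorm {m : ℕ} (v : Fin m → ℝ) : ℝ := Real.sqrt (∑ j, (v j) ^ 2)

/-!
Each step is compared with a plain Euler step from the exact solution. That step has local error
`O(Δ²)`: by the mean value theorem, `F (θ s) s` moves by at most `(K₁ √m K₃ + K₂) Δ` on a step.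
The Gauss–Seidel intermediate points `θ_i^{(j)}` differ from `θ_i` by at most `K₃ Δ` in each
coordinate, so the Lipschitz bound costs only an extra `O(Δ²)`. Hence the error `e_i` satisfies
`e_{i+1} ≤ (1 + √m K₁ Δ) e_i + C Δ²`, and the discrete Grönwall inequality gives
`e_i ≤ C T exp (√m K₁ T) Δ`. The separation `η` keeps every point at which `F` is evaluated inside
the sets `𝒜 t` as long as this bound plus `√m K₃ Δ` stays below `η`, which closes the induction.
-/

open Real

lemma eNorm_eq_norm_toLp {m : ℕ} (v : Fin m → ℝ) : eNorm v = ‖WithLp.toLp 2 v‖ := by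
  simp [eNorm, EuclideanSpace.norm_eq]

lemma eNorm_nonneg {m : ℕ} (v : Fin m → ℝ) : 0 ≤ eNorm v := sqrt_nonneg _

lemma abs_le_eNorm {m : ℕ} (v : Fin m → ℝ) (j : Fin m) : |v j| ≤ eNorm v := by
  simpa [eNorm_eq_norm_toLp] using PiLp.norm_apply_le (WithLp.toLp 2 v) j

lemma eNorm_le_add_sqrt_mul {m : ℕ} {x y : Fin m → ℝ} {c : ℝ} (hc : 0 ≤ c)
    (h : ∀ j, |x j| ≤ |y j| + c) : eNorm x ≤ eNorm y + √m * c := by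
  calc eNorm x ≤ eNorm (fun j => |y j| + c) := by
        refine sqrt_le_sqrt (Finset.sum_le_sum fun j _ => ?_)
        rw [sq_le_sq, abs_of_nonneg (by positivity : 0 ≤ |y j| + c)]
        exact h j
    _ ≤ eNorm (fun j => |y j|) + eNorm (fun _ : Fin m => c) := by
        simp only [eNorm_eq_norm_toLp]
        exact norm_add_le (WithLp.toLp 2 fun j => |y j|) (WithLp.toLp 2 fun _ => c)
    _ = eNorm y + √m * c := by
        simp [eNorm, sqrt_mul, hc]

lemma eNorm_le_sqrt_mul {m : ℕ} {v : Fin m → ℝ} {c : ℝ} (hc : 0 ≤ c) (h : ∀ j, |v j| ≤ c) :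
    eNorm v ≤ √m * c := by
  simpa [eNorm] using eNorm_le_add_sqrt_mul (y := 0) hc (by simpa using h)

lemma abs_sub_le_mul_of_exists_hasDerivAt {f : ℝ → ℝ} {a b C : ℝ} (hab : a ≤ b)
    (h : ∀ x ∈ Icc a b, ∃ d, HasDerivAt f d x ∧ |d| ≤ C) : |f b - f a| ≤ C * (b - a) := by
  choose! f' hf hC using h
  simpa using norm_image_sub_le_of_norm_deriv_le_segment'
    (fun x hx => (hf x hx).hasDerivWithinAt) (fun x hx => hC x (Ico_subset_Icc_self hx))
    b (right_mem_Icc.2 hab)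

lemma abs_sub_sub_mul_le_of_hasDerivAt {f f' : ℝ → ℝ} {a b C : ℝ} (hab : a ≤ b)
    (hf : ∀ x ∈ Icc a b, HasDerivAt f (f' x) x) (hC : ∀ x ∈ Icc a b, |f' x - f' a| ≤ C) :
    |f b - f a - (b - a) * f' a| ≤ C * (b - a) := by
  have := abs_sub_le_mul_of_exists_hasDerivAt (f := fun x => f x - x * f' a) hab
    fun x hx => ⟨_, (hf x hx).sub (hasDerivAt_mul_const (f' a)), hC x hx⟩
  convert this using 2
  ring

lemma le_mul_exp_of_le_one_add_mul {u : ℕ → ℝ} {b c : ℝ} {n : ℕ} (hb : 0 ≤ b) (hc : 0 ≤ c)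
    (h₀ : u 0 ≤ 0) (hstep : ∀ k < n, u k ≤ k * b * exp (k * c) → u (k + 1) ≤ (1 + c) * u k + b) :
    u n ≤ n * b * exp (n * c) := by
  induction n with
  | zero => simpa using h₀
  | succ k ih =>
    have hk := ih fun i hi => hstep i (by omega)
    have hexp : 1 + c ≤ exp c := by linarith [add_one_le_exp c]
    calc u (k + 1) ≤ (1 + c) * (k * b * exp (k * c)) + b :=
          (hstep k k.lt_succ_self hk).trans (by gcongr)
      _ ≤ exp c * (k * b * exp (k * c)) + b * exp ((k + 1) * c) := by
          gcongr
          exact le_mul_of_one_le_right hb (one_le_exp (by positivity))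
      _ = (k + 1 : ℕ) * b * exp ((k + 1 : ℕ) * c) := by
          push_cast
          rw [add_one_mul, exp_add]
          ring

/-- `partialUpdate x y j` is the paper's `θ_i^{(j)}` with `x = θ_i` and `y = θ_{i+1}`. -/
def partialUpdate {m : ℕ} (x y : Fin m → ℝ) (j : Fin m) : Fin m → ℝ :=
  fun l => if (l : ℕ) < j then y l else x l

lemma abs_partialUpdate_sub_le {m : ℕ} {x y : Fin m → ℝ} {c : ℝ} (hc : 0 ≤ c) (j : Fin m)
    (h : ∀ l < j, |y l - x l| ≤ c) (l : Fin m) : |partialUpdate x y j l - x l| ≤ c := by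
  unfold partialUpdate
  split_ifs with hl
  · exact h l hl
  · simpa using hc

lemma abs_gaussSeidel_sub_le {m : ℕ} {x y : Fin m → ℝ} {G : (Fin m → ℝ) → Fin m → ℝ}
    {S : Set (Fin m → ℝ)} {Δ K : ℝ} (hΔ : 0 ≤ Δ) (hK : 0 ≤ K)
    (hy : ∀ j, y j = x j + Δ * G (partialUpdate x y j) j) (hG : ∀ v ∈ S, ∀ j, |G v j| ≤ K)
    (hS : ∀ v, (∀ l, |v l - x l| ≤ K * Δ) → v ∈ S) (j : Fin m) : |y j - x j| ≤ K * Δ := by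
  induction j using WellFoundedLT.induction with
  | _ j ih =>
    have hmem := hS _ (abs_partialUpdate_sub_le (by positivity) j ih)
    rw [hy j, add_sub_cancel_left, abs_mul, abs_of_nonneg hΔ, mul_comm K]
    exact mul_le_mul_of_nonneg_left (hG _ hmem j) hΔ

/-- The assumptions of the theorem, with the separation condition in contrapositive form and
with nonnegative constants. -/
structure SolutionTubeBounds {m : ℕ} (F : (Fin m → ℝ) → ℝ → Fin m → ℝ) (θ : ℝ → Fin m → ℝ)
    (𝒜 : ℝ → Set (Fin m → ℝ)) (T η L K₂ K₃ : ℝ) : Prop where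
  hasDerivAt : ∀ t ∈ Icc 0 T, ∀ j, HasDerivAt (fun s => θ s j) (F (θ t) t j) t
  η_pos : 0 < η
  mem_of_eNorm_sub_lt : ∀ t ∈ Icc 0 T, ∀ v, eNorm (θ t - v) < η → v ∈ 𝒜 t
  L_nonneg : 0 ≤ L
  lipschitz : ∀ t ∈ Icc 0 T, ∀ u ∈ 𝒜 t, ∀ v ∈ 𝒜 t, ∀ j, |F u t j - F v t j| ≤ L * eNorm (u - v)
  K₂_nonneg : 0 ≤ K₂
  hasDerivAt_time : ∀ t ∈ Icc 0 T, ∀ v ∈ 𝒜 t, ∀ j,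
    ∃ d, HasDerivAt (fun s => F v s j) d t ∧ |d| ≤ K₂
  K₃_nonneg : 0 ≤ K₃
  abs_le : ∀ t ∈ Icc 0 T, ∀ v ∈ 𝒜 t, ∀ j, |F v t j| ≤ K₃

namespace SolutionTubeBounds

variable {m : ℕ} {F : (Fin m → ℝ) → ℝ → Fin m → ℝ} {θ : ℝ → Fin m → ℝ}
  {𝒜 : ℝ → Set (Fin m → ℝ)} {T η L K₂ K₃ t Δ : ℝ}

lemma solution_mem (h : SolutionTubeBounds F θ 𝒜 T η L K₂ K₃) (ht : t ∈ Icc 0 T) : θ t ∈ 𝒜 t :=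
  h.mem_of_eNorm_sub_lt t ht _ (by simpa [eNorm] using h.η_pos)

lemma eNorm_sub_le (h : SolutionTubeBounds F θ 𝒜 T η L K₂ K₃) {a b : ℝ} (ha : 0 ≤ a)
    (hab : a ≤ b) (hb : b ≤ T) : eNorm (θ b - θ a) ≤ √m * (K₃ * (b - a)) := by
  have hsub : Icc a b ⊆ Icc 0 T := Icc_subset_Icc ha hb
  refine eNorm_le_sqrt_mul (mul_nonneg h.K₃_nonneg (sub_nonneg.2 hab)) fun j => ?_
  exact abs_sub_le_mul_of_exists_hasDerivAt hab fun x hx =>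
    ⟨_, h.hasDerivAt x (hsub hx) j, h.abs_le x (hsub hx) _ (h.solution_mem (hsub hx)) j⟩

lemma solution_mem_of_mem_Icc_add (h : SolutionTubeBounds F θ 𝒜 T η L K₂ K₃) (ht : 0 ≤ t)
    (htΔ : t + Δ ≤ T) (hsmall : √m * (K₃ * Δ) < η) {s : ℝ} (hs : s ∈ Icc t (t + Δ)) :
    θ t ∈ 𝒜 s := by
  have := h.K₃_nonneg
  refine h.mem_of_eNorm_sub_lt s ⟨ht.trans hs.1, hs.2.trans htΔ⟩ _ ?_
  calc eNorm (θ s - θ t) ≤ √m * (K₃ * (s - t)) := h.eNorm_sub_le ht hs.1 (hs.2.trans htΔ)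
    _ ≤ √m * (K₃ * Δ) := by gcongr; linarith [hs.2]
    _ < η := hsmall

lemma abs_sub_le_of_mem_Icc_add (h : SolutionTubeBounds F θ 𝒜 T η L K₂ K₃) (ht : 0 ≤ t)
    (htΔ : t + Δ ≤ T) (hsmall : √m * (K₃ * Δ) < η) {s : ℝ} (hs : s ∈ Icc t (t + Δ)) (j : Fin m) :
    |F (θ s) s j - F (θ t) t j| ≤ (L * √m * K₃ + K₂) * Δ := by
  have := h.L_nonneg
  have := h.K₂_nonneg
  have := h.K₃_nonneg
  have hs₀ : s ∈ Icc 0 T := ⟨ht.trans hs.1, hs.2.trans htΔ⟩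
  have hmem : ∀ r ∈ Icc t s, θ t ∈ 𝒜 r := fun r hr =>
    h.solution_mem_of_mem_Icc_add ht htΔ hsmall ⟨hr.1, hr.2.trans hs.2⟩
  have hspace : |F (θ s) s j - F (θ t) s j| ≤ L * (√m * (K₃ * Δ)) := by
    refine (h.lipschitz s hs₀ _ (h.solution_mem hs₀) _ (hmem s ⟨hs.1, le_rfl⟩) j).trans ?_
    gcongr
    refine (h.eNorm_sub_le ht hs.1 hs₀.2).trans ?_
    gcongr
    linarith [hs.2]
  have htime : |F (θ t) s j - F (θ t) t j| ≤ K₂ * Δ := by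
    refine (abs_sub_le_mul_of_exists_hasDerivAt hs.1 fun r hr =>
      h.hasDerivAt_time r ⟨ht.trans hr.1, hr.2.trans hs₀.2⟩ _ (hmem r hr) j).trans ?_
    gcongr
    linarith [hs.2]
  calc |F (θ s) s j - F (θ t) t j|
      ≤ |F (θ s) s j - F (θ t) s j| + |F (θ t) s j - F (θ t) t j| := abs_sub_le _ _ _
    _ ≤ L * (√m * (K₃ * Δ)) + K₂ * Δ := add_le_add hspace htime
    _ = (L * √m * K₃ + K₂) * Δ := by ring

lemma abs_localError_le (h : SolutionTubeBounds F θ 𝒜 T η L K₂ K₃) (ht : 0 ≤ t) (hΔ : 0 ≤ Δ)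
    (htΔ : t + Δ ≤ T) (hsmall : √m * (K₃ * Δ) < η) (j : Fin m) :
    |θ (t + Δ) j - θ t j - Δ * F (θ t) t j| ≤ (L * √m * K₃ + K₂) * Δ ^ 2 := by
  have := abs_sub_sub_mul_le_of_hasDerivAt (f := fun s => θ s j) (f' := fun s => F (θ s) s j)
    (le_add_of_nonneg_right hΔ) (fun s hs => h.hasDerivAt s ⟨ht.trans hs.1, hs.2.trans htΔ⟩ j)
    (fun s hs => h.abs_sub_le_of_mem_Icc_add ht htΔ hsmall hs j)
  simpa [sq, mul_assoc] using this

lemma partialUpdate_eNorm_le_and_mem (h : SolutionTubeBounds F θ 𝒜 T η L K₂ K₃) (ht : t ∈ Icc 0 T)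
    (hΔ : 0 ≤ Δ) {x y : Fin m → ℝ} (hy : ∀ j, y j = x j + Δ * F (partialUpdate x y j) t j)
    (hsmall : eNorm (θ t - x) + √m * (K₃ * Δ) < η) (j : Fin m) :
    eNorm (θ t - partialUpdate x y j) ≤ eNorm (θ t - x) + √m * (K₃ * Δ) ∧
      partialUpdate x y j ∈ 𝒜 t := by
  have := h.K₃_nonneg
  have hclose : ∀ v, (∀ l, |v l - x l| ≤ K₃ * Δ) →
      eNorm (θ t - v) ≤ eNorm (θ t - x) + √m * (K₃ * Δ) := fun v hv =>
    eNorm_le_add_sqrt_mul (by positivity) fun l =>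
      (abs_sub_le _ (x l) _).trans <| by
        rw [abs_sub_comm (x l)]
        exact add_le_add_right (hv l) _
  have hmem : ∀ v, (∀ l, |v l - x l| ≤ K₃ * Δ) → v ∈ 𝒜 t := fun v hv =>
    h.mem_of_eNorm_sub_lt t ht v ((hclose v hv).trans_lt hsmall)
  have hinc := abs_gaussSeidel_sub_le (G := fun v j => F v t j) hΔ h.K₃_nonneg hy
    (h.abs_le t ht) hmem
  have hpu := abs_partialUpdate_sub_le (by positivity) j (fun l _ => hinc l)
  exact ⟨hclose _ hpu, hmem _ hpu⟩

lemma eNorm_sub_step_le (h : SolutionTubeBounds F θ 𝒜 T η L K₂ K₃) (ht : 0 ≤ t) (hΔ : 0 ≤ Δ)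
    (htΔ : t + Δ ≤ T) {x y : Fin m → ℝ} (hy : ∀ j, y j = x j + Δ * F (partialUpdate x y j) t j)
    (hsmall : eNorm (θ t - x) + √m * (K₃ * Δ) < η) :
    eNorm (θ (t + Δ) - y) ≤
      (1 + √m * L * Δ) * eNorm (θ t - x) + √m * (2 * L * √m * K₃ + K₂) * Δ ^ 2 := by
  have := h.L_nonneg
  have := h.K₂_nonneg
  have := h.K₃_nonneg
  have ht' : t ∈ Icc 0 T := ⟨ht, by linarith⟩
  set e := eNorm (θ t - x)
  have he : 0 ≤ e := eNorm_nonneg _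
  have hcoord : ∀ j, |(θ (t + Δ) - y) j| ≤
      |(θ t - x) j| + (Δ * L * (e + √m * (K₃ * Δ)) + (L * √m * K₃ + K₂) * Δ ^ 2) := by
    intro j
    obtain ⟨hclose, hmem⟩ := h.partialUpdate_eNorm_le_and_mem ht' hΔ hy hsmall j
    have hlip : |Δ * (F (θ t) t j - F (partialUpdate x y j) t j)| ≤
        Δ * L * (e + √m * (K₃ * Δ)) := by
      rw [abs_mul, abs_of_nonneg hΔ, mul_assoc]
      gcongr
      exact (h.lipschitz t ht' _ (h.solution_mem ht') _ hmem j).trans (by gcongr)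
    have htrunc := h.abs_localError_le ht hΔ htΔ (by linarith) j
    calc |(θ (t + Δ) - y) j|
        = |(θ (t + Δ) j - θ t j - Δ * F (θ t) t j) + (θ t - x) j
            + Δ * (F (θ t) t j - F (partialUpdate x y j) t j)| := by
          rw [Pi.sub_apply, Pi.sub_apply, hy j]; ring_nf
      _ ≤ |θ (t + Δ) j - θ t j - Δ * F (θ t) t j| + |(θ t - x) j|
            + |Δ * (F (θ t) t j - F (partialUpdate x y j) t j)| := abs_add_three _ _ _
      _ ≤ _ := by linarith
  calc eNorm (θ (t + Δ) - y)
      ≤ e + √m * (Δ * L * (e + √m * (K₃ * Δ)) + (L * √m * K₃ + K₂) * Δ ^ 2) :=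
        eNorm_le_add_sqrt_mul (by positivity) hcoord
    _ = (1 + √m * L * Δ) * e + √m * (2 * L * √m * K₃ + K₂) * Δ ^ 2 := by
        ring

lemma exists_eNorm_sub_le_mul (h : SolutionTubeBounds F θ 𝒜 T η L K₂ K₃) (hT : 0 ≤ T) :
    ∃ M, 0 ≤ M ∧ ∃ δ > 0, ∀ Δ, 0 < Δ → Δ < δ → ∀ seq : ℕ → Fin m → ℝ, seq 0 = θ 0 →
      (∀ i j, seq (i + 1) j = seq i j + Δ * F (partialUpdate (seq i) (seq (i + 1)) j) (i * Δ) j) →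
      ∀ n ≤ ⌊T / Δ⌋₊, eNorm (θ (n * Δ) - seq n) ≤ M * Δ := by
  have := h.L_nonneg
  have := h.K₂_nonneg
  have := h.K₃_nonneg
  set C := √m * (2 * L * √m * K₃ + K₂)
  set M := C * T * exp (√m * L * T)
  refine ⟨M, by positivity, η / (M + √m * K₃ + 1), by have := h.η_pos; positivity,
    fun Δ hΔ hδ seq h₀ hrec n hn => ?_⟩
  have hsmall : (M + √m * K₃) * Δ < η := by
    rw [lt_div_iff₀ (by positivity)] at hδ
    nlinarith
  have hle : ∀ k ≤ ⌊T / Δ⌋₊, (k : ℝ) * Δ ≤ T := fun k hk =>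
    (le_div_iff₀ hΔ).1 ((Nat.cast_le.2 hk).trans (Nat.floor_le (by positivity)))
  have hbound : ∀ k ≤ ⌊T / Δ⌋₊, k * (C * Δ ^ 2) * exp (k * (√m * L * Δ)) ≤ M * Δ := by
    intro k hk
    calc k * (C * Δ ^ 2) * exp (k * (√m * L * Δ))
        = C * Δ * (k * Δ) * exp (√m * L * (k * Δ)) := by ring_nf
      _ ≤ C * Δ * T * exp (√m * L * T) := by gcongr <;> exact hle k hk
      _ = M * Δ := by ring
  refine (le_mul_exp_of_le_one_add_mul (u := fun k => eNorm (θ (k * Δ) - seq k))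
    (by positivity) (by positivity) (by simp [h₀, eNorm]) fun k hk hu => ?_).trans (hbound n hn)
  have hk : (k : ℝ) * Δ + Δ ≤ T := by simpa [add_one_mul] using hle (k + 1) (by omega)
  have := h.eNorm_sub_step_le (by positivity) hΔ.le hk (hrec k)
    (by nlinarith [hu.trans (hbound k (by omega))])
  simpa [add_one_mul] using this

end SolutionTubeBounds

theorem modified_euler_converges_general (m : ℕ) (T : ℝ) (hT : 0 < T)
    (F : (Fin m → ℝ) → ℝ → (Fin m → ℝ)) (θ : ℝ → (Fin m → ℝ))
    (𝒜 : ℝ → Set (Fin m → ℝ))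
    -- the true solution solves the ODE, coordinatewise
    (hODE : ∀ t ∈ Icc (0 : ℝ) T, ∀ j : Fin m,
      HasDerivAt (fun s => θ s j) (F (θ t) t j) t)
    -- positive separation between the trajectory and the complements of the sets 𝒜(t)
    (hsep : ∃ η > 0, ∀ t ∈ Icc (0 : ℝ) T, ∀ v : Fin m → ℝ, v ∉ 𝒜 t →
      η ≤ eNorm (fun j => θ t j - v j))
    (K₁ K₂ K₃ : ℝ)
    -- coordinatewise Lipschitz bound on 𝒜(t)
    (hK₁ : ∀ t ∈ Icc (0 : ℝ) T, ∀ u ∈ 𝒜 t, ∀ v ∈ 𝒜 t, ∀ j : Fin m,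
      |F u t j - F v t j| ≤ K₁ * eNorm (fun l => u l - v l))
    -- bounded time-derivative of each coordinate of F on 𝒜(t)
    (hK₂ : ∀ t ∈ Icc (0 : ℝ) T, ∀ v ∈ 𝒜 t, ∀ j : Fin m,
      ∃ d : ℝ, HasDerivAt (fun s => F v s j) d t ∧ |d| ≤ K₂)
    -- norm bound on F over 𝒜(t)
    (hK₃ : ∀ t ∈ Icc (0 : ℝ) T, ∀ v ∈ 𝒜 t, eNorm (F v t) ≤ K₃) :
    ∀ ε > 0, ∃ δ > 0, ∀ Δ : ℝ, 0 < Δ → Δ < δ →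
      ∀ seq : ℕ → (Fin m → ℝ),
        seq 0 = θ 0 →
        -- coordinate-sequential Euler update: each coordinate uses the freshly
        -- updated lower coordinates
        (∀ i : ℕ, ∀ j : Fin m,
          seq (i + 1) j = seq i j +
            Δ * F (fun l => if (l : ℕ) < (j : ℕ) then seq (i + 1) l else seq i l)
              (i * Δ) j) →
        ∀ i : ℕ, i ≤ Nat.floor (T / Δ) →
          eNorm (fun j => θ (i * Δ) j - seq i j) ≤ ε := by
  obtain ⟨η, hη, hsep⟩ := hsep
  have h : SolutionTubeBounds F θ 𝒜 T η (max K₁ 0) (max K₂ 0) (max K₃ 0) :=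
    { hasDerivAt := hODE
      η_pos := hη
      mem_of_eNorm_sub_lt := fun t ht v hv => by_contra fun hv' => (hsep t ht v hv').not_gt hv
      L_nonneg := le_max_right _ _
      lipschitz := fun t ht u hu v hv j => (hK₁ t ht u hu v hv j).trans <|
        mul_le_mul_of_nonneg_right (le_max_left _ _) (eNorm_nonneg _)
      K₂_nonneg := le_max_right _ _
      hasDerivAt_time := fun t ht v hv j =>
        (hK₂ t ht v hv j).imp fun _ hd => ⟨hd.1, hd.2.trans (le_max_left _ _)⟩
      K₃_nonneg := le_max_right _ _
      abs_le := fun t ht v hv j =>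
        ((abs_le_eNorm _ j).trans (hK₃ t ht v hv)).trans (le_max_left _ _) }
  intro ε hε
  obtain ⟨M, hM, δ, hδ, hconv⟩ := h.exists_eNorm_sub_le_mul hT.le
  refine ⟨min δ (ε / (M + 1)), by positivity, fun Δ hΔ hΔδ seq h₀ hrec i hi => ?_⟩
  refine (hconv Δ hΔ (hΔδ.trans_le (min_le_left _ _)) seq h₀ hrec i hi).trans ?_
  have := (lt_div_iff₀ (by positivity)).1 (hΔδ.trans_le (min_le_right _ _))
  nlinarith

/-- Lemma 3: the coordinate-sequential (Gauss–Seidel style) Euler method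
converges uniformly to the true ODE solution as the step size goes to 0. -/
theorem modified_euler_converges (m : ℕ) (hm : 0 < m) (T : ℝ) (hT : 0 < T)
    (F : (Fin m → ℝ) → ℝ → (Fin m → ℝ)) (θ : ℝ → (Fin m → ℝ))
    (𝒜 : ℝ → Set (Fin m → ℝ))
    -- the true solution solves the ODE, coordinatewise
    (hODE : ∀ t ∈ Icc (0 : ℝ) T, ∀ j : Fin m,
      HasDerivAt (fun s => θ s j) (F (θ t) t j) t)
    -- positive separation between the trajectory and the complements of the sets 𝒜(t)
    (hsep : ∃ η > 0, ∀ t ∈ Icc (0 : ℝ) T, ∀ v : Fin m → ℝ, v ∉ 𝒜 t →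
      η ≤ eNorm (fun j => θ t j - v j))
    (K₁ K₂ K₃ : ℝ)
    -- coordinatewise Lipschitz bound on 𝒜(t)
    (hK₁ : ∀ t ∈ Icc (0 : ℝ) T, ∀ u ∈ 𝒜 t, ∀ v ∈ 𝒜 t, ∀ j : Fin m,
      |F u t j - F v t j| ≤ K₁ * eNorm (fun l => u l - v l))
    -- bounded time-derivative of each coordinate of F on 𝒜(t)
    (hK₂ : ∀ t ∈ Icc (0 : ℝ) T, ∀ v ∈ 𝒜 t, ∀ j : Fin m,
      ∃ d : ℝ, HasDerivAt (fun s => F v s j) d t ∧ |d| ≤ K₂)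
    -- norm bound on F over 𝒜(t)
    (hK₃ : ∀ t ∈ Icc (0 : ℝ) T, ∀ v ∈ 𝒜 t, eNorm (F v t) ≤ K₃) :
    ∀ ε > 0, ∃ δ > 0, ∀ Δ : ℝ, 0 < Δ → Δ < δ →
      ∀ seq : ℕ → (Fin m → ℝ),
        seq 0 = θ 0 →
        -- coordinate-sequential Euler update: each coordinate uses the freshly
        -- updated lower coordinates
        (∀ i : ℕ, ∀ j : Fin m,
          seq (i + 1) j = seq i j +
            Δ * F (fun l => if (l : ℕ) < (j : ℕ) then seq (i + 1) l else seq i l)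
              (i * Δ) j) →
        ∀ i : ℕ, i ≤ Nat.floor (T / Δ) →
          eNorm (fun j => θ (i * Δ) j - seq i j) ≤ ε :=
  modified_euler_converges_general m T hT F θ 𝒜 hODE hsep K₁ K₂ K₃ hK₁ hK₂ hK₃
end

section
/- Let γ, K₀, λ, a > 0 with K₀ > γ, and for S ≥ 0 let 𝒜(S) ⊂ ℝ⁴ be the set of θ with (1+a²S)(λ − θ₄) + a²θ₃² ≥ γ and ‖θ‖_∞ ≤ K₀. Then for any θ, θ̃ ∈ 𝒜(S), there is a piecewise-linear path from θ to θ̃ staying within 𝒜(S) of length at most 2(1 + 2a²K₀)·‖θ − θ̃‖. -/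
open Set

/-- The Euclidean norm of a vector in `Fin 4 → ℝ`. -/
noncomputable def eNorm4 (v : Fin 4 → ℝ) : ℝ := Real.sqrt (∑ j, (v j) ^ 2)

private lemma convex_abs_le {u v p q K : ℝ} (hu : 0 ≤ u) (hv : 0 ≤ v) (huv : u + v = 1)
    (hp : |p| ≤ K) (hq : |q| ≤ K) : |u * p + v * q| ≤ K := by
  have hv1 : v = 1 - u := by linarith
  subst hv1
  rw [abs_le] at *
  have t1 : 0 ≤ u * (K - p) := mul_nonneg hu (by linarith [hp.2])
  have t2 : 0 ≤ (1 - u) * (K - q) := mul_nonneg (by linarith) (by linarith [hq.2])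
  have t3 : 0 ≤ u * (p + K) := mul_nonneg hu (by linarith [hp.1])
  have t4 : 0 ≤ (1 - u) * (q + K) := mul_nonneg (by linarith) (by linarith [hq.1])
  constructor <;> linarith [t1, t2, t3, t4]

private lemma eNorm4_coord_le (v : Fin 4 → ℝ) (j : Fin 4) : |v j| ≤ eNorm4 v := by
  have h1 : (v j) ^ 2 ≤ ∑ i, (v i) ^ 2 :=
    Finset.single_le_sum (f := fun i => (v i) ^ 2) (fun i _ => sq_nonneg _)
      (Finset.mem_univ j)
  calc |v j| = Real.sqrt ((v j) ^ 2) := (Real.sqrt_sq_eq_abs _).symm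
    _ ≤ _ := Real.sqrt_le_sqrt h1

private lemma key_quad (γ lam a c m δ u v x y : ℝ)
    (hc1 : 1 ≤ c) (hδ : δ = a ^ 2 * (x - y) ^ 2 / 4) (hδ0 : 0 ≤ δ)
    (hu : 0 ≤ u) (hv : 0 ≤ v) (huv : u + v = 1)
    (H1 : γ ≤ c * (lam - m) + a ^ 2 * x ^ 2)
    (H2 : γ ≤ c * (lam - m) + a ^ 2 * y ^ 2) :
    γ ≤ c * (lam - (m - δ)) + a ^ 2 * (u * x + v * y) ^ 2 := by
  have hv1 : v = 1 - u := by linarith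
  subst hv1
  have t1 : 0 ≤ u * (c * (lam - m) + a ^ 2 * x ^ 2 - γ) := mul_nonneg hu (by linarith)
  have t2 : 0 ≤ (1 - u) * (c * (lam - m) + a ^ 2 * y ^ 2 - γ) :=
    mul_nonneg (by linarith) (by linarith)
  have t3 : 0 ≤ a ^ 2 * ((u - (1 - u)) ^ 2 * (x - y) ^ 2) := by positivity
  have t4 : 0 ≤ (c - 1) * δ := mul_nonneg (by linarith) hδ0
  linarith [t1, t2, t4, t3,
    (by ring : c * (lam - (m - δ)) + a ^ 2 * (u * x + (1-u) * y) ^ 2 - γ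
      = u * (c * (lam - m) + a ^ 2 * x ^ 2 - γ) + (1 - u) * (c * (lam - m) + a ^ 2 * y ^ 2 - γ)
        + (c - 1) * δ + a ^ 2 * ((u - (1 - u)) ^ 2 * (x - y) ^ 2) / 4
        + (δ - a ^ 2 * (x - y) ^ 2 / 4))]

private lemma convex_comb_le {u v x y z : ℝ} (hu : 0 ≤ u) (hv : 0 ≤ v) (huv : u + v = 1)
    (hx : x ≤ z) (hy : y ≤ z) : u * x + v * y ≤ z := by
  have hv1 : v = 1 - u := by linarith
  subst hv1
  have t1 : 0 ≤ u * (z - x) := mul_nonneg hu (by linarith)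
  have t2 : 0 ≤ (1 - u) * (z - y) := mul_nonneg (by linarith) (by linarith)
  linarith [t1, t2]

set_option maxHeartbeats 1000000 in
/-- any two points of 𝒜(S) are joined by a piecewise-linear path inside
𝒜(S) of length at most 2(1 + 2a²K₀) times their Euclidean distance. -/
theorem path_in_A_of_bounded_length (γ K₀ lam a S : ℝ)
    (hγ : 0 < γ) (hK₀ : 0 < K₀) (hlam : 0 < lam) (ha : 0 < a)
    (hK₀γ : γ < K₀) (hS : 0 ≤ S) :
    let 𝒜 : Set (Fin 4 → ℝ) :=
      {θ | γ ≤ (1 + a ^ 2 * S) * (lam - θ 3) + a ^ 2 * (θ 2) ^ 2 ∧ ∀ j, |θ j| ≤ K₀}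
    ∀ θ ∈ 𝒜, ∀ θ' ∈ 𝒜,
      ∃ (n : ℕ) (p : Fin (n + 1) → (Fin 4 → ℝ)),
        p 0 = θ ∧ p (Fin.last n) = θ' ∧
        (∀ i : Fin n, segment ℝ (p i.castSucc) (p i.succ) ⊆ 𝒜) ∧
        (∑ i : Fin n, eNorm4 (fun j => p i.succ j - p i.castSucc j))
          ≤ 2 * (1 + 2 * a ^ 2 * K₀) * eNorm4 (fun j => θ j - θ' j) := by
  intro 𝒜 θ hθ θ' hθ'
  obtain ⟨hθg, hθb⟩ := hθ
  obtain ⟨hθ'g, hθ'b⟩ := hθ'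
  set c : ℝ := 1 + a ^ 2 * S with hc
  have hc1 : (1 : ℝ) ≤ c := by
    have := mul_nonneg (sq_nonneg a) hS
    linarith
  have hc0 : (0 : ℝ) ≤ c := by linarith
  set δ : ℝ := a ^ 2 * (θ 2 - θ' 2) ^ 2 / 4 with hδ
  have hδ0 : 0 ≤ δ := by positivity
  set m : ℝ := min (θ 3) (θ' 3) with hm
  have hmθ : m ≤ θ 3 := min_le_left _ _
  have hmθ' : m ≤ θ' 3 := min_le_right _ _
  have hmK : -K₀ ≤ m := le_min (neg_le_of_abs_le (hθb 3)) (neg_le_of_abs_le (hθ'b 3))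
  set b : ℝ := max (-K₀) (m - δ) with hb
  have hbm : b ≤ m := max_le hmK (by linarith)
  have hbK : -K₀ ≤ b := le_max_left _ _
  have hbmδ : m - δ ≤ b := le_max_right _ _
  have hbθ : b ≤ θ 3 := hbm.trans hmθ
  have hbθ' : b ≤ θ' 3 := hbm.trans hmθ'
  have hbabs : |b| ≤ K₀ := abs_le.2 ⟨hbK, hbθ.trans (le_of_abs_le (hθb 3))⟩
  -- the intermediate points
  set w : Fin 4 → ℝ := ![θ 0, θ 1, θ 2, b] with hw
  set w' : Fin 4 → ℝ := ![θ' 0, θ' 1, θ' 2, b] with hw'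
  have hwb : ∀ j, |w j| ≤ K₀ := by
    intro j
    fin_cases j <;>
      simp only [hw, Matrix.cons_val_zero, Matrix.cons_val_one, Matrix.head_cons,
        Matrix.cons_val_two, Matrix.tail_cons, Matrix.cons_val_three, Fin.isValue,
        Fin.mk_zero, Fin.mk_one]
    · exact hθb 0
    · exact hθb 1
    · exact hθb 2
    · exact hbabs
  have hw'b : ∀ j, |w' j| ≤ K₀ := by
    intro j
    fin_cases j <;>
      simp only [hw', Matrix.cons_val_zero, Matrix.cons_val_one, Matrix.head_cons,
        Matrix.cons_val_two, Matrix.tail_cons, Matrix.cons_val_three, Fin.isValue,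
        Fin.mk_zero, Fin.mk_one]
    · exact hθ'b 0
    · exact hθ'b 1
    · exact hθ'b 2
    · exact hbabs
  have hw0 : w 0 = θ 0 := rfl
  have hw1 : w 1 = θ 1 := rfl
  have hw2 : w 2 = θ 2 := rfl
  have hw3 : w 3 = b := rfl
  have hw'0 : w' 0 = θ' 0 := rfl
  have hw'1 : w' 1 = θ' 1 := rfl
  have hw'2 : w' 2 = θ' 2 := rfl
  have hw'3 : w' 3 = b := rfl
  -- constraint slack at (x, b) for x on the segment between θ 2 and θ' 2
  have key : ∀ u v : ℝ, 0 ≤ u → 0 ≤ v → u + v = 1 →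
      γ ≤ c * (lam - b) + a ^ 2 * (u * θ 2 + v * θ' 2) ^ 2 := by
    intro u v hu hv huv
    have H1 : γ ≤ c * (lam - m) + a ^ 2 * (θ 2) ^ 2 := by
      have h := mul_nonneg hc0 (sub_nonneg.2 hmθ)
      have hr : c * (lam - m) = c * (lam - θ 3) + c * (θ 3 - m) := by ring
      linarith [hθg]
    have H2 : γ ≤ c * (lam - m) + a ^ 2 * (θ' 2) ^ 2 := by
      have h := mul_nonneg hc0 (sub_nonneg.2 hmθ')
      have hr : c * (lam - m) = c * (lam - θ' 3) + c * (θ' 3 - m) := by ring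
      linarith [hθ'g]
    rcases le_or_gt (m - δ) (-K₀) with h | h
    · have hbe : b = -K₀ := max_eq_left h
      rw [hbe]
      have t1 : 0 ≤ (c - 1) * (lam + K₀) :=
        mul_nonneg (by linarith) (by linarith)
      have t2 : 0 ≤ a ^ 2 * (u * θ 2 + v * θ' 2) ^ 2 := by positivity
      have hr : c * (lam - -K₀) + a ^ 2 * (u * θ 2 + v * θ' 2) ^ 2
          = (lam + K₀) + (c - 1) * (lam + K₀) + a ^ 2 * (u * θ 2 + v * θ' 2) ^ 2 := by ring
      linarith [t1, t2]
    · have hbe : b = m - δ := max_eq_right h.le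
      rw [hbe]
      exact key_quad γ lam a c m δ u v (θ 2) (θ' 2) hc1 hδ hδ0 hu hv huv H1 H2
  -- the three segments lie in 𝒜
  have seg1 : segment ℝ θ w ⊆ 𝒜 := by
    rintro z ⟨u, v, hu, hv, huv, rfl⟩
    refine ⟨?_, ?_⟩
    · show γ ≤ c * (lam - (u • θ + v • w) 3) + a ^ 2 * ((u • θ + v • w) 2) ^ 2
      simp only [Pi.add_apply, Pi.smul_apply, smul_eq_mul, hw2, hw3]
      have hz2 : u * θ 2 + v * θ 2 = θ 2 := by linear_combination θ 2 * huv
      rw [hz2]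
      have hz3 : u * θ 3 + v * b ≤ θ 3 := convex_comb_le hu hv huv le_rfl hbθ
      have h := mul_nonneg hc0 (sub_nonneg.2 hz3)
      have hr : c * (lam - (u * θ 3 + v * b))
          = c * (lam - θ 3) + c * (θ 3 - (u * θ 3 + v * b)) := by ring
      linarith [hθg]
    · intro j
      show |(u • θ + v • w) j| ≤ K₀
      simp only [Pi.add_apply, Pi.smul_apply, smul_eq_mul]
      exact convex_abs_le hu hv huv (hθb j) (hwb j)
  have seg3 : segment ℝ w' θ' ⊆ 𝒜 := by
    rintro z ⟨u, v, hu, hv, huv, rfl⟩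
    refine ⟨?_, ?_⟩
    · show γ ≤ c * (lam - (u • w' + v • θ') 3) + a ^ 2 * ((u • w' + v • θ') 2) ^ 2
      simp only [Pi.add_apply, Pi.smul_apply, smul_eq_mul, hw'2, hw'3]
      have hz2 : u * θ' 2 + v * θ' 2 = θ' 2 := by linear_combination θ' 2 * huv
      rw [hz2]
      have hz3 : u * b + v * θ' 3 ≤ θ' 3 := convex_comb_le hu hv huv hbθ' le_rfl
      have h := mul_nonneg hc0 (sub_nonneg.2 hz3)
      have hr : c * (lam - (u * b + v * θ' 3))
          = c * (lam - θ' 3) + c * (θ' 3 - (u * b + v * θ' 3)) := by ring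
      linarith [hθ'g]
    · intro j
      show |(u • w' + v • θ') j| ≤ K₀
      simp only [Pi.add_apply, Pi.smul_apply, smul_eq_mul]
      exact convex_abs_le hu hv huv (hw'b j) (hθ'b j)
  have seg2 : segment ℝ w w' ⊆ 𝒜 := by
    rintro z ⟨u, v, hu, hv, huv, rfl⟩
    refine ⟨?_, ?_⟩
    · show γ ≤ c * (lam - (u • w + v • w') 3) + a ^ 2 * ((u • w + v • w') 2) ^ 2
      simp only [Pi.add_apply, Pi.smul_apply, smul_eq_mul, hw2, hw3, hw'2, hw'3]
      have hz3 : u * b + v * b = b := by linear_combination b * huv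
      rw [hz3]
      exact key u v hu hv huv
    · intro j
      show |(u • w + v • w') j| ≤ K₀
      simp only [Pi.add_apply, Pi.smul_apply, smul_eq_mul]
      exact convex_abs_le hu hv huv (hwb j) (hw'b j)
  -- the length estimate
  set N : ℝ := eNorm4 (fun j => θ j - θ' j) with hN
  have hN0 : 0 ≤ N := Real.sqrt_nonneg _
  have habs3 : |θ 3 - θ' 3| ≤ N := eNorm4_coord_le (fun j => θ j - θ' j) 3
  have habs2 : |θ 2 - θ' 2| ≤ N := eNorm4_coord_le (fun j => θ j - θ' j) 2
  have e1 : eNorm4 (fun j => w j - θ j) = θ 3 - b := by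
    rw [eNorm4, Fin.sum_univ_four]
    simp only [hw0, hw1, hw2, hw3, sub_self]
    rw [show (0:ℝ)^2 + 0^2 + 0^2 + (b - θ 3)^2 = (θ 3 - b)^2 by ring]
    rw [Real.sqrt_sq_eq_abs]
    exact abs_of_nonneg (by linarith)
  have e3 : eNorm4 (fun j => θ' j - w' j) = θ' 3 - b := by
    rw [eNorm4, Fin.sum_univ_four]
    simp only [hw'0, hw'1, hw'2, hw'3, sub_self]
    rw [show (0:ℝ)^2 + 0^2 + 0^2 + (θ' 3 - b)^2 = (θ' 3 - b)^2 by ring]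
    rw [Real.sqrt_sq_eq_abs]
    exact abs_of_nonneg (by linarith)
  have e2 : eNorm4 (fun j => w' j - w j) ≤ N := by
    rw [hN, eNorm4, eNorm4]
    apply Real.sqrt_le_sqrt
    rw [Fin.sum_univ_four, Fin.sum_univ_four]
    simp only [hw0, hw1, hw2, hw3, hw'0, hw'1, hw'2, hw'3, sub_self]
    have h3 : (0:ℝ) ≤ (θ 3 - θ' 3) ^ 2 := sq_nonneg _
    linarith [h3,
      (by ring : (θ' 0 - θ 0) ^ 2 = (θ 0 - θ' 0) ^ 2),
      (by ring : (θ' 1 - θ 1) ^ 2 = (θ 1 - θ' 1) ^ 2),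
      (by ring : (θ' 2 - θ 2) ^ 2 = (θ 2 - θ' 2) ^ 2)]
  have hmin : (θ 3 - m) + (θ' 3 - m) ≤ |θ 3 - θ' 3| := by
    rcases le_total (θ 3) (θ' 3) with h | h
    · rw [hm, min_eq_left h]
      rcases abs_cases (θ 3 - θ' 3) with ⟨h1, h2⟩ | ⟨h1, h2⟩ <;> linarith
    · rw [hm, min_eq_right h]
      rcases abs_cases (θ 3 - θ' 3) with ⟨h1, h2⟩ | ⟨h1, h2⟩ <;> linarith
  have hx2K : |θ 2 - θ' 2| ≤ 2 * K₀ := by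
    have h1 := abs_le.1 (hθb 2)
    have h2 := abs_le.1 (hθ'b 2)
    rw [abs_le]
    constructor <;> linarith [h1.1, h1.2, h2.1, h2.2]
  have hδN : 2 * δ ≤ a ^ 2 * K₀ * N := by
    have hh := mul_le_mul_of_nonneg_right hx2K (abs_nonneg (θ 2 - θ' 2))
    have hsq : (θ 2 - θ' 2) ^ 2 ≤ 2 * K₀ * |θ 2 - θ' 2| := by
      calc (θ 2 - θ' 2) ^ 2 = |θ 2 - θ' 2| ^ 2 := (sq_abs _).symm
        _ = |θ 2 - θ' 2| * |θ 2 - θ' 2| := sq (|θ 2 - θ' 2|)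
        _ ≤ 2 * K₀ * |θ 2 - θ' 2| := hh
    have h1 : a ^ 2 * (θ 2 - θ' 2) ^ 2 ≤ a ^ 2 * (2 * K₀ * |θ 2 - θ' 2|) :=
      mul_le_mul_of_nonneg_left hsq (sq_nonneg a)
    have h2 : a ^ 2 * K₀ * |θ 2 - θ' 2| ≤ a ^ 2 * K₀ * N :=
      mul_le_mul_of_nonneg_left habs2 (mul_nonneg (sq_nonneg a) hK₀.le)
    rw [hδ]
    linarith [h1, h2]
  refine ⟨3, ![θ, w, w', θ'], rfl, rfl, ?_, ?_⟩
  · intro i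
    fin_cases i
    · exact seg1
    · exact seg2
    · exact seg3
  · rw [Fin.sum_univ_three]
    have r1 : (fun j => (![θ, w, w', θ'] : Fin 4 → Fin 4 → ℝ) (Fin.succ 0) j
        - ![θ, w, w', θ'] (Fin.castSucc 0) j) = fun j => w j - θ j := rfl
    have r2 : (fun j => (![θ, w, w', θ'] : Fin 4 → Fin 4 → ℝ) (Fin.succ 1) j
        - ![θ, w, w', θ'] (Fin.castSucc 1) j) = fun j => w' j - w j := rfl
    have r3 : (fun j => (![θ, w, w', θ'] : Fin 4 → Fin 4 → ℝ) (Fin.succ 2) j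
        - ![θ, w, w', θ'] (Fin.castSucc 2) j) = fun j => θ' j - w' j := rfl
    rw [r1, r2, r3, e1, e3]
    have haN : 0 ≤ a ^ 2 * K₀ * N := mul_nonneg (mul_nonneg (sq_nonneg a) hK₀.le) hN0
    have h34 : (θ 3 - b) + (θ' 3 - b) ≤ N + 2 * δ := by
      have h1 : θ 3 - b ≤ θ 3 - m + δ := by linarith
      have h2 : θ' 3 - b ≤ θ' 3 - m + δ := by linarith
      have h3 := habs3
      linarith [hmin]
    linarith [e2, hδN, haN, h34]
end

section
/- For a k×k strictly lower triangular matrix D with entries D_{ij} = −a²u_i s_j + z_i r_j/λ for j < i and 0 otherwise (vectors u, z, r, s ∈ ℝ^k, λ ≠ 0), if additionally (Ds)_i = u_i for all i and (Dᵀz)_j = (ab s_j − r_j)/b² for all j, then a²‖u‖² + tr(DDᵀ) = (a/(bλ))·Σ_j r_j s_j − (1/(b²λ))·Σ_j r_j². -/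
open Matrix

/-- a²‖u‖² + tr(DDᵀ) = (a/(bλ))·Σ r_j s_j − (1/(b²λ))·Σ r_j². -/
theorem energy_identity (a b lam : ℝ) (ha : a ≠ 0) (hb : b ≠ 0) (hlam : lam ≠ 0)
    (k : ℕ) (hk : 0 < k) (u z r s : Fin k → ℝ)
    (D : Matrix (Fin k) (Fin k) ℝ)
    (hD : ∀ i j : Fin k, D i j =
      if (j : ℕ) < (i : ℕ) then -(a ^ 2) * u i * s j + z i * r j / lam else 0)
    (hDs : D *ᵥ s = u)
    (hDTz : ∀ j : Fin k, (Dᵀ *ᵥ z) j = (a * b * s j - r j) / b ^ 2) :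
    a ^ 2 * (∑ i, (u i) ^ 2) + Matrix.trace (D * Dᵀ)
      = (a / (b * lam)) * (∑ j, r j * s j) - (1 / (b ^ 2 * lam)) * (∑ j, (r j) ^ 2) := by
  have hs : ∀ i, (∑ j, D i j * s j) = u i := by
    intro i
    have := congrFun hDs i
    simpa [Matrix.mulVec, dotProduct] using this
  have hz : ∀ j, (∑ i, D i j * z i) = (a * b * s j - r j) / b ^ 2 := by
    intro j
    have := hDTz j
    simpa [Matrix.mulVec, dotProduct, Matrix.transpose_apply, mul_comm] using this
  have htr : Matrix.trace (D * Dᵀ) = ∑ i, ∑ j, D i j * D i j := by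
    simp [Matrix.trace, Matrix.mul_apply, Matrix.diag, Matrix.transpose_apply]
  have hsq : ∀ i j, D i j * D i j =
      -(a ^ 2) * u i * (D i j * s j) + (r j * (D i j * z i)) / lam := by
    intro i j
    by_cases h : (j : ℕ) < (i : ℕ)
    · rw [hD i j]; simp only [if_pos h]; field_simp
    · rw [hD i j]; simp [h]
  have htr2 : Matrix.trace (D * Dᵀ) =
      -(a ^ 2) * (∑ i, (u i) ^ 2) + (1 / lam) * ∑ j, r j * ((a * b * s j - r j) / b ^ 2) := by
    rw [htr]
    have : (∑ i, ∑ j, D i j * D i j) =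
        (∑ i, ∑ j, -(a ^ 2) * u i * (D i j * s j)) +
        (∑ i, ∑ j, (r j * (D i j * z i)) / lam) := by
      rw [← Finset.sum_add_distrib]
      refine Finset.sum_congr rfl fun i _ => ?_
      rw [← Finset.sum_add_distrib]
      exact Finset.sum_congr rfl fun j _ => hsq i j
    rw [this]
    congr 1
    · rw [Finset.mul_sum]
      refine Finset.sum_congr rfl fun i _ => ?_
      rw [← Finset.mul_sum, hs i]; ring
    · rw [Finset.sum_comm, Finset.mul_sum]
      refine Finset.sum_congr rfl fun j _ => ?_
      rw [← hz j, Finset.mul_sum, Finset.mul_sum]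
      refine Finset.sum_congr rfl fun i _ => ?_
      ring
  rw [htr2]
  have hcancel : ∀ S T : ℝ, a ^ 2 * S + (-(a ^ 2) * S + T) = T := fun S T => by ring
  rw [hcancel]
  rw [Finset.mul_sum, Finset.mul_sum, Finset.mul_sum, ← Finset.sum_sub_distrib]
  refine Finset.sum_congr rfl fun j _ => ?_
  field_simp
end
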